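/- For every sufficiently large n ∈ ℕ there exist a finite instance space Z, a probability distribution D on Z, a function f : ℝ × Z → ℝ, and a map g : ℝ × Z → ℝ with the following properties: (i) the population loss F(w) = E_{z∼D}[f(w;z)] equals n^{−3/8}·max{−w, −1}, so F is convex, 1-Lipschitz, and is minimized exactly on [1, ∞) with minimum value −n^{−3/8}; (ii) for every w, E_{z∼D}[g(w;z)] is a subgradient G(w) of F at w and E_{z∼D}[|g(w;z) − G(w)|²] ≤ 1; and (iii) for every step size 0 < η < 1/(64 n^{5/4}) and every T ≥ 1, gradient descent on the empirical loss using g, started from w₁ = 0 on an i.i.d. sample S ∼ D^n, satisfies E_S[F(ŵ_T^{GD})] − min_{w∈ℝ} F(w) ≥ (1 − 2n^{−1/4})/(4 n^{3/8}). -/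

import Mathlib

/-!
The population loss is `F w = c * max (-w) (-1)` with `c = n^{-3/8}`, and the oracle returns a
subgradient of `F` plus zero-mean noise. The instance space consists of a heavy atom `0` and
`J = ⌊3n/4⌋` light atoms of mass `q = n^{-5/4}/8`. On the bucket `[k/n, (k+1)/n)`, `k < J`, the
noise puts a spike `M = 2nc` on atom `k + 1`, compensated by a small bias on atom `0`; its variance
is `q M² + O(c²) ≤ 1`.

If the sample contains atom `k + 1`, gradient descent never passes `(k+1)/n`: below the bucket a
step moves right by at most `η (c + bias) ≤ 1/n`, and inside it the spike outweighs the other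
`n - 1` gradients, so the step moves left. Hence the averaged iterate stays below `J/n ≤ 3/4` and
pays excess loss at least `c/4`. The sample misses all light atoms with probability
`(1 - Jq)^n ≤ 1/(1 + nJq) ≤ 2 n^{-1/4}`.

All parameters are powers of `r = n^{1/8}`: `c = r⁻³`, `q = r⁻¹⁰/8`, `M = 2r⁵`.
-/

open scoped RealInnerProductSpace

/-- Gradient-descent iterates on the empirical loss: `w_{t+1} = w_t − (η/n)∑ᵢ g(w_t; Sᵢ)`. -/
noncomputable def gdIterate {E : Type*} [NormedAddCommGroup E] [NormedSpace ℝ E]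
    {Z : Type*} [Fintype Z] {n : ℕ}
    (g : E → Z → E) (η : ℝ) (w₁ : E) (S : Fin n → Z) : ℕ → E
  | 0 => w₁
  | t + 1 => gdIterate g η w₁ S t - (η / n) • ∑ i, g (gdIterate g η w₁ S t) (S i)

open Finset

lemma gdIterate_lt {Z : Type*} [Fintype Z] {n : ℕ} (g : ℝ → Z → ℝ) (η : ℝ) {w₁ b : ℝ}
    (S : Fin n → Z) (h₁ : w₁ < b) (hstep : ∀ w < b, w - η / n * ∑ i, g w (S i) < b) :
    ∀ t, gdIterate g η w₁ S t < b
  | 0 => h₁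
  | t + 1 => hstep _ (gdIterate_lt g η S h₁ hstep t)

lemma inv_smul_sum_range_le {T : ℕ} (hT : 1 ≤ T) {w : ℕ → ℝ} {b : ℝ} (hw : ∀ t, w t ≤ b) :
    (T : ℝ)⁻¹ • ∑ t ∈ range T, w t ≤ b := by
  have hT' : (0 : ℝ) < T := by exact_mod_cast hT
  rw [smul_eq_mul, inv_mul_le_iff₀ hT']
  simpa using sum_le_card_nsmul (range T) w b fun t _ => hw t

lemma pow_le_inv_one_add_mul {a : ℝ} (ha0 : 0 ≤ a) (ha1 : a ≤ 1) (n : ℕ) :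
    (1 - a) ^ n ≤ (1 + n * a)⁻¹ :=
  calc (1 - a) ^ n ≤ Real.exp (-a) ^ n :=
        pow_le_pow_left₀ (by linarith) (Real.one_sub_le_exp_neg a) n
    _ = (Real.exp (n * a))⁻¹ := by rw [← Real.exp_nat_mul, ← Real.exp_neg, mul_neg]
    _ ≤ (1 + n * a)⁻¹ :=
        inv_anti₀ (by positivity) (by linarith [Real.add_one_le_exp (n * a)])

lemma mul_one_sub_pow_le_sum_prod_mul_sub {Z : Type*} [Fintype Z] [DecidableEq Z] {n : ℕ}
    {D : Z → ℝ} (hD : ∀ z, 0 ≤ D z) (hD1 : ∑ z, D z = 1) (z₀ : Z) {h : (Fin n → Z) → ℝ}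
    {m a : ℝ} (hm : ∀ S, m ≤ h S) (ha : ∀ S, S ≠ (fun _ => z₀) → m + a ≤ h S) :
    a * (1 - D z₀ ^ n) ≤ (∑ S : Fin n → Z, (∏ i, D (S i)) * h S) - m := by
  set P : (Fin n → Z) → ℝ := fun S => ∏ i, D (S i)
  have hP1 : ∑ S, P S = 1 := by rw [← Fintype.sum_pow, hD1, one_pow]
  have hP0 : ∀ S, 0 ≤ P S := fun S => prod_nonneg fun i _ => hD (S i)
  have hPz₀ : ∑ S ∈ univ.erase (fun _ => z₀), P S = 1 - D z₀ ^ n := by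
    rw [sum_erase_eq_sub (mem_univ _), hP1]; simp [P]
  calc a * (1 - D z₀ ^ n) = ∑ S ∈ univ.erase (fun _ => z₀), P S * a := by
        rw [← sum_mul, hPz₀, mul_comm]
    _ ≤ ∑ S ∈ univ.erase (fun _ => z₀), P S * (h S - m) :=
        sum_le_sum fun S hS => mul_le_mul_of_nonneg_left
          (by linarith [ha S (ne_of_mem_erase hS)]) (hP0 S)
    _ ≤ ∑ S, P S * (h S - m) :=
        sum_le_sum_of_subset_of_nonneg (subset_univ _) fun S _ _ =>
          mul_nonneg (hP0 S) (sub_nonneg.2 (hm S))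
    _ = (∑ S, P S * h S) - m := by simp only [mul_sub, sum_sub_distrib, ← sum_mul, hP1, one_mul]

lemma rpow_div_eight {x : ℝ} (hx : 0 ≤ x) (k : ℕ) :
    x ^ ((k : ℝ) / 8) = (x ^ ((1 : ℝ) / 8)) ^ k := by
  rw [← Real.rpow_natCast, ← Real.rpow_mul hx]; ring_nf

lemma rpow_neg_div_eight {x : ℝ} (hx : 0 ≤ x) (k : ℕ) :
    x ^ (-(k : ℝ) / 8) = ((x ^ ((1 : ℝ) / 8)) ^ k)⁻¹ := by
  rw [neg_div, Real.rpow_neg hx, rpow_div_eight hx]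

lemma one_le_and_eight_le_pow_four {r : ℝ} (hr : 0 ≤ r) (h : 64 ≤ r ^ 8) : 1 ≤ r ∧ 8 ≤ r ^ 4 := by
  have h4 : 8 ≤ r ^ 4 := by nlinarith [pow_nonneg hr 4]
  refine ⟨?_, h4⟩
  by_contra! h1
  nlinarith [pow_le_one₀ (n := 4) hr h1.le]

def clippedLoss (c w : ℝ) : ℝ := c * max (-w) (-1)

noncomputable def clippedLossSubgrad (c w : ℝ) : ℝ := if 1 ≤ w then 0 else -c

section clippedLoss

variable {c : ℝ}

lemma convexOn_clippedLoss (hc : 0 ≤ c) : ConvexOn ℝ Set.univ (clippedLoss c) :=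
  (((concaveOn_id convex_univ).neg).sup (convexOn_const (-1) convex_univ)).smul hc

lemma abs_clippedLoss_sub_le (hc0 : 0 ≤ c) (hc1 : c ≤ 1) (u v : ℝ) :
    |clippedLoss c u - clippedLoss c v| ≤ |u - v| :=
  calc |clippedLoss c u - clippedLoss c v| = c * |max (-u) (-1) - max (-v) (-1)| := by
        rw [clippedLoss, clippedLoss, ← mul_sub, abs_mul, abs_of_nonneg hc0]
    _ ≤ 1 * |-u - -v| := mul_le_mul hc1 (abs_max_sub_max_le_abs _ _ _) (abs_nonneg _) zero_le_one
    _ = |u - v| := by rw [one_mul, ← abs_neg]; ring_nf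

lemma neg_le_clippedLoss (hc : 0 ≤ c) (w : ℝ) : -c ≤ clippedLoss c w := by
  unfold clippedLoss; nlinarith [le_max_right (-w) (-1)]

lemma neg_mul_le_clippedLoss (hc : 0 ≤ c) (w : ℝ) : -(c * w) ≤ clippedLoss c w := by
  unfold clippedLoss; nlinarith [le_max_left (-w) (-1)]

lemma clippedLoss_eq_neg_iff (hc : 0 < c) (w : ℝ) : clippedLoss c w = -c ↔ 1 ≤ w := by
  rw [clippedLoss, show -c = c * -1 by ring, mul_right_inj' hc.ne', max_eq_right_iff,
    neg_le_neg_iff]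

lemma iInf_clippedLoss (hc : 0 ≤ c) : ⨅ w, clippedLoss c w = -c :=
  le_antisymm
    (ciInf_le_of_le ⟨-c, Set.forall_mem_range.2 (neg_le_clippedLoss hc)⟩ 1 (by simp [clippedLoss]))
    (le_ciInf (neg_le_clippedLoss hc))

lemma clippedLoss_add_subgrad_mul_le (hc : 0 ≤ c) (w u : ℝ) :
    clippedLoss c w + clippedLossSubgrad c w * (u - w) ≤ clippedLoss c u := by
  unfold clippedLossSubgrad
  split_ifs with hw
  · simpa [clippedLoss, max_eq_right (neg_le_neg hw)] using neg_le_clippedLoss hc u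
  · simpa [clippedLoss, max_eq_left (neg_le_neg (not_le.1 hw).le), mul_sub]
      using neg_mul_le_clippedLoss hc u

end clippedLoss

namespace GDLowerBound

variable (n J : ℕ) (c q M : ℝ)

def mass (z : Fin (J + 1)) : ℝ := if z = 0 then 1 - J * q else q

noncomputable def bias : ℝ := M * q / (1 - J * q)

noncomputable def noise (w : ℝ) (z : Fin (J + 1)) : ℝ :=
  if ⌊n * w⌋₊ < J then
    if z = 0 then -bias J q M else if (z : ℕ) = ⌊n * w⌋₊ + 1 then M else 0
  else 0

noncomputable def oracle (w : ℝ) (z : Fin (J + 1)) : ℝ :=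
  clippedLossSubgrad c w + noise n J q M w z

variable {n J c q M}

lemma sum_mass : ∑ z, mass J q z = 1 := by
  simp [mass, Fin.sum_univ_succ, Fin.succ_ne_zero]

lemma mass_nonneg (hq : 0 ≤ q) (hJq : J * q ≤ 1) (z : Fin (J + 1)) : 0 ≤ mass J q z := by
  unfold mass; split_ifs <;> linarith

lemma sum_mass_mul_ite {m : ℕ} (hm : m ≠ 0) (hmJ : m ≤ J) (a b : ℝ) :
    ∑ z, mass J q z * (if z = 0 then a else if (z : ℕ) = m then b else 0)
      = (1 - J * q) * a + q * b := by
  obtain ⟨k, rfl⟩ := Nat.exists_eq_succ_of_ne_zero hm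
  rw [Fin.sum_univ_succ, sum_eq_single (⟨k, hmJ⟩ : Fin J)]
  · simp [mass]
  · intro i _ hi
    simp [mass, Fin.ext_iff.not.1 hi]
  · simp

lemma sum_mass_mul_noise (hJq : J * q ≠ 1) (w : ℝ) :
    ∑ z, mass J q z * noise n J q M w z = 0 := by
  by_cases hw : ⌊n * w⌋₊ < J
  · simp only [noise, if_pos hw]
    rw [sum_mass_mul_ite (Nat.succ_ne_zero _) hw, bias, mul_neg,
      mul_div_cancel₀ _ (sub_ne_zero.2 (Ne.symm hJq))]
    ring
  · simp [noise, hw]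

lemma sum_mass_mul_noise_sq_le (hq : 0 ≤ q) (hJq : J * q ≤ 1) (w : ℝ) :
    ∑ z, mass J q z * noise n J q M w z ^ 2 ≤ (1 - J * q) * bias J q M ^ 2 + q * M ^ 2 := by
  by_cases hw : ⌊n * w⌋₊ < J
  · have hsq : ∀ z, noise n J q M w z ^ 2 = if z = 0 then bias J q M ^ 2
        else if (z : ℕ) = ⌊n * w⌋₊ + 1 then M ^ 2 else 0 := by
      intro z; simp only [noise, if_pos hw]; split_ifs <;> ring
    simp only [hsq, sum_mass_mul_ite (Nat.succ_ne_zero _) hw, le_refl]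
  · have : 0 ≤ 1 - J * q := by linarith
    simp only [noise, if_neg hw, zero_pow two_ne_zero, mul_zero, sum_const_zero]
    positivity

lemma sum_mass_mul_oracle (hJq : J * q ≠ 1) (w : ℝ) :
    ∑ z, mass J q z * oracle n J c q M w z = clippedLossSubgrad c w := by
  simp only [oracle, mul_add, sum_add_distrib, ← sum_mul, sum_mass, one_mul,
    sum_mass_mul_noise hJq, add_zero]

lemma sum_mass_mul_sq_oracle_sub_le (hq : 0 ≤ q) (hJq : J * q < 1) (w : ℝ) :
    ∑ z, mass J q z * |oracle n J c q M w z - ∑ z', mass J q z' * oracle n J c q M w z'| ^ 2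
      ≤ (1 - J * q) * bias J q M ^ 2 + q * M ^ 2 := by
  rw [sum_mass_mul_oracle hJq.ne]
  simp only [oracle, add_sub_cancel_left, sq_abs]
  exact sum_mass_mul_noise_sq_le hq hJq.le w

lemma neg_le_oracle (hc : 0 ≤ c) (hb : 0 ≤ bias J q M) (hM : 0 ≤ M) (w : ℝ) (z : Fin (J + 1)) :
    -(c + bias J q M) ≤ oracle n J c q M w z := by
  unfold oracle clippedLossSubgrad noise; split_ifs <;> linarith

lemma oracle_eq_of_floor (hJn : J ≤ n) {w : ℝ} (hw : ⌊n * w⌋₊ < J) {z : Fin (J + 1)}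
    (hz : (z : ℕ) = ⌊n * w⌋₊ + 1) : oracle n J c q M w z = -c + M := by
  have hw1 : ¬ 1 ≤ w := fun h =>
    hw.not_ge (hJn.trans (Nat.le_floor (by simpa using mul_le_mul_of_nonneg_left h n.cast_nonneg)))
  have hz0 : z ≠ 0 := fun h => by simp [h] at hz
  simp [oracle, clippedLossSubgrad, noise, hw1, hw, hz0, hz]

lemma neg_mul_le_sum_oracle (hc : 0 ≤ c) (hb : 0 ≤ bias J q M) (hM : 0 ≤ M) (w : ℝ)
    (S : Fin n → Fin (J + 1)) : -(n * (c + bias J q M)) ≤ ∑ i, oracle n J c q M w (S i) := by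
  have := card_nsmul_le_sum univ _ _ fun i _ => neg_le_oracle (n := n) hc hb hM w (S i)
  rwa [card_univ, Fintype.card_fin, nsmul_eq_mul, mul_neg] at this

lemma sum_oracle_nonneg (hJn : J ≤ n) (hc : 0 ≤ c) (hb : 0 ≤ bias J q M)
    (hM : n * (c + bias J q M) ≤ M) {w : ℝ} (hw : ⌊n * w⌋₊ < J) (S : Fin n → Fin (J + 1))
    {i₀ : Fin n} (hi₀ : (S i₀ : ℕ) = ⌊n * w⌋₊ + 1) : 0 ≤ ∑ i, oracle n J c q M w (S i) := by
  have hM0 : 0 ≤ M := (mul_nonneg n.cast_nonneg (add_nonneg hc hb)).trans hM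
  have hrest := card_nsmul_le_sum (univ.erase i₀) _ _ fun i _ =>
    neg_le_oracle (n := n) hc hb hM0 w (S i)
  rw [card_erase_of_mem (mem_univ _), card_univ, Fintype.card_fin, nsmul_eq_mul,
    Nat.cast_pred i₀.pos] at hrest
  rw [← add_sum_erase _ _ (mem_univ i₀), oracle_eq_of_floor hJn hw hi₀]
  nlinarith

lemma oracle_step_lt (hJn : J ≤ n) (hc : 0 ≤ c) (hb : 0 ≤ bias J q M)
    (hM : n * (c + bias J q M) ≤ M) {η : ℝ} (hη : 0 ≤ η) (hηb : η * (c + bias J q M) ≤ 1 / n)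
    (S : Fin n → Fin (J + 1)) {i₀ : Fin n} (hi₀ : (S i₀ : ℕ) ≠ 0) {w : ℝ}
    (hw : w < (S i₀ : ℕ) / n) :
    w - η / n * ∑ i, oracle n J c q M w (S i) < (S i₀ : ℕ) / n := by
  have hn : (0 : ℝ) < n := by exact_mod_cast i₀.pos
  obtain ⟨k, hk⟩ : ∃ k, (S i₀ : ℕ) = k + 1 := Nat.exists_eq_succ_of_ne_zero hi₀
  rw [hk, Nat.cast_succ, add_div] at hw ⊢
  by_cases hwk : w < k / n
  · have hsum := mul_le_mul_of_nonneg_left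
      (neg_mul_le_sum_oracle hc hb ((mul_nonneg n.cast_nonneg (add_nonneg hc hb)).trans hM) w S)
      (by positivity : 0 ≤ η / n)
    have hcancel : η / n * -(n * (c + bias J q M)) = -(η * (c + bias J q M)) := by field_simp
    linarith
  · have hfloor : ⌊n * w⌋₊ = k := by
      rw [not_lt, div_le_iff₀ hn] at hwk
      rw [← add_div, lt_div_iff₀ hn] at hw
      rw [Nat.floor_eq_iff (by nlinarith [k.cast_nonneg (α := ℝ)])]
      constructor <;> linarith
    have hsum := sum_oracle_nonneg hJn hc hb hM (by have := (S i₀).isLt; omega) S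
      (hfloor ▸ hk)
    have : 0 ≤ η / n * ∑ i, oracle n J c q M w (S i) := by positivity
    linarith

theorem le_expected_excess_clippedLoss (hJn : J ≤ n) (hc : 0 ≤ c) (hq : 0 ≤ q)
    (hJq : J * q ≤ 1) (hb : 0 ≤ bias J q M) (hM : n * (c + bias J q M) ≤ M) {η : ℝ}
    (hη : 0 ≤ η) (hηb : η * (c + bias J q M) ≤ 1 / n) {T : ℕ} (hT : 1 ≤ T) :
    c * (1 - J / n) * (1 - (1 - J * q) ^ n) ≤
      (∑ S : Fin n → Fin (J + 1), (∏ i, mass J q (S i)) *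
        clippedLoss c ((T : ℝ)⁻¹ • ∑ t ∈ range T, gdIterate (oracle n J c q M) η 0 S t)) - -c := by
  have h0 : mass J q 0 = 1 - J * q := if_pos rfl
  rw [← h0]
  refine mul_one_sub_pow_le_sum_prod_mul_sub (mass_nonneg hq hJq) sum_mass 0
    (fun S => neg_le_clippedLoss hc _) fun S hS => ?_
  obtain ⟨i₀, hi₀⟩ := Function.ne_iff.1 hS
  have hi₀' : (S i₀ : ℕ) ≠ 0 := fun h => hi₀ (Fin.ext h)
  have hbound : ((S i₀ : ℕ) : ℝ) / n ≤ J / n := by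
    gcongr; exact_mod_cast Nat.lt_succ_iff.1 (S i₀).isLt
  have hpos : (0 : ℝ) < (S i₀ : ℕ) / n :=
    div_pos (by exact_mod_cast Nat.pos_of_ne_zero hi₀') (by exact_mod_cast i₀.pos)
  have havg := inv_smul_sum_range_le hT fun t => (gdIterate_lt _ η S hpos
    (fun w hw => oracle_step_lt hJn hc hb hM hη hηb S hi₀' hw) t).le
  calc -c + c * (1 - J / n) = -(c * (J / n)) := by ring
    _ ≤ -(c * ((T : ℝ)⁻¹ • ∑ t ∈ range T, gdIterate (oracle n J c q M) η 0 S t)) := by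
        gcongr; exact havg.trans hbound
    _ ≤ _ := neg_mul_le_clippedLoss hc _

section Numerics

variable {J : ℕ} {r : ℝ} (hr : 1 ≤ r) (hr4 : 8 ≤ r ^ 4) (hJ : (J : ℝ) ≤ r ^ 8)
include hr hJ

lemma mul_inv_pow_ten_le : J * ((r ^ 10)⁻¹ / 8) ≤ 1 / 8 := by
  have h0 : 0 < r := by linarith
  calc J * ((r ^ 10)⁻¹ / 8) ≤ r ^ 8 * ((r ^ 10)⁻¹ / 8) := by gcongr
    _ = (r ^ 2)⁻¹ / 8 := by field_simp
    _ ≤ 1 / 8 := by gcongr; exact inv_le_one_of_one_le₀ (one_le_pow₀ hr)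

lemma bias_nonneg : 0 ≤ bias J ((r ^ 10)⁻¹ / 8) (2 * r ^ 5) := by
  have := mul_inv_pow_ten_le hr hJ
  unfold bias; apply div_nonneg <;> [positivity; linarith]

lemma bias_le : bias J ((r ^ 10)⁻¹ / 8) (2 * r ^ 5) ≤ (r ^ 3)⁻¹ := by
  have h0 : 0 < r := by linarith
  have hJq := mul_inv_pow_ten_le hr hJ
  rw [bias, div_le_iff₀ (by linarith)]
  calc 2 * r ^ 5 * ((r ^ 10)⁻¹ / 8) = (r ^ 3)⁻¹ * (r ^ 2)⁻¹ / 4 := by field_simp; ring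
    _ ≤ (r ^ 3)⁻¹ * 1 / 4 := by gcongr; exact inv_le_one_of_one_le₀ (one_le_pow₀ hr)
    _ ≤ (r ^ 3)⁻¹ * (1 - J * ((r ^ 10)⁻¹ / 8)) := by
        rw [mul_div_assoc]; gcongr; linarith

include hr4 in
lemma one_sub_mul_bias_sq_add_le_one :
    (1 - J * ((r ^ 10)⁻¹ / 8)) * bias J ((r ^ 10)⁻¹ / 8) (2 * r ^ 5) ^ 2
      + (r ^ 10)⁻¹ / 8 * (2 * r ^ 5) ^ 2 ≤ 1 := by
  have h0 : 0 < r := by linarith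
  have hb := bias_nonneg hr hJ
  have hbc := bias_le hr hJ
  have hJq : 0 ≤ J * ((r ^ 10)⁻¹ / 8) := by positivity
  have hqM : (r ^ 10)⁻¹ / 8 * (2 * r ^ 5) ^ 2 = 1 / 2 := by field_simp; ring
  have hc : (r ^ 3)⁻¹ ^ 2 ≤ 1 / 2 := by
    rw [inv_pow, inv_le_comm₀ (by positivity) (by norm_num)]
    nlinarith [one_le_pow₀ (n := 2) hr]
  nlinarith [pow_le_pow_left₀ hb hbc 2]

lemma pow_eight_mul_add_bias_le :
    r ^ 8 * ((r ^ 3)⁻¹ + bias J ((r ^ 10)⁻¹ / 8) (2 * r ^ 5)) ≤ 2 * r ^ 5 := by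
  have h0 : 0 < r := by linarith
  calc r ^ 8 * ((r ^ 3)⁻¹ + bias J ((r ^ 10)⁻¹ / 8) (2 * r ^ 5)) ≤ r ^ 8 * (2 * (r ^ 3)⁻¹) := by
        gcongr; linarith [bias_le hr hJ]
    _ = 2 * r ^ 5 := by field_simp

lemma mul_add_bias_le_one_div {η : ℝ} (hη : η < 1 / (64 * r ^ 10)) :
    η * ((r ^ 3)⁻¹ + bias J ((r ^ 10)⁻¹ / 8) (2 * r ^ 5)) ≤ 1 / r ^ 8 := by
  have h0 : 0 < r := by linarith
  have hbc := bias_le hr hJ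
  calc η * ((r ^ 3)⁻¹ + bias J ((r ^ 10)⁻¹ / 8) (2 * r ^ 5))
      ≤ 1 / (64 * r ^ 10) * (2 * (r ^ 3)⁻¹) :=
        mul_le_mul hη.le (by linarith) (by linarith [bias_nonneg hr hJ]) (by positivity)
    _ = 1 / r ^ 8 * (1 / (32 * r ^ 5)) := by field_simp; ring
    _ ≤ 1 / r ^ 8 * 1 := by
        gcongr; rw [div_le_one (by positivity)]; nlinarith [one_le_pow₀ (n := 5) hr]
    _ = 1 / r ^ 8 := mul_one _

include hr4 in
lemma pow_le_two_mul_inv {n : ℕ} (hn : (n : ℝ) = r ^ 8) (hJ2 : r ^ 8 / 2 ≤ J) :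
    (1 - J * ((r ^ 10)⁻¹ / 8)) ^ n ≤ 2 * (r ^ 2)⁻¹ := by
  have h0 : 0 < r := by linarith
  have hJq := mul_inv_pow_ten_le hr hJ
  have hnJq : r ^ 6 / 16 ≤ n * (J * ((r ^ 10)⁻¹ / 8)) :=
    calc r ^ 6 / 16 = r ^ 8 * (r ^ 8 / 2 * ((r ^ 10)⁻¹ / 8)) := by field_simp; ring
      _ ≤ n * (J * ((r ^ 10)⁻¹ / 8)) := by rw [hn]; gcongr
  calc (1 - J * ((r ^ 10)⁻¹ / 8)) ^ n ≤ (1 + n * (J * ((r ^ 10)⁻¹ / 8)))⁻¹ :=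
        pow_le_inv_one_add_mul (by positivity) (by linarith) n
    _ ≤ (r ^ 6 / 16)⁻¹ := inv_anti₀ (by positivity) (by linarith)
    _ ≤ 2 * (r ^ 2)⁻¹ := by
        rw [inv_le_iff_one_le_mul₀ (by positivity)]
        field_simp
        nlinarith [one_le_pow₀ (n := 2) hr]

include hr4 in
lemma div_le_mul_one_sub_div_mul_one_sub_pow {n : ℕ} (hn : (n : ℝ) = r ^ 8) (hJ2 : r ^ 8 / 2 ≤ J)
    (hJ34 : 4 * J ≤ 3 * n) :
    (1 - 2 * (r ^ 2)⁻¹) / (4 * r ^ 3) ≤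
      (r ^ 3)⁻¹ * (1 - J / n) * (1 - (1 - J * ((r ^ 10)⁻¹ / 8)) ^ n) := by
  have h0 : 0 < r := by linarith
  have hJq := mul_inv_pow_ten_le hr hJ
  have hJn : (J : ℝ) / n ≤ 3 / 4 := by
    rw [div_le_iff₀ (by rw [hn]; positivity)]
    have : (4 * J : ℝ) ≤ 3 * n := by exact_mod_cast hJ34
    linarith
  have hpow := pow_le_two_mul_inv hr hr4 hJ hn hJ2
  have hpow1 : (1 - J * ((r ^ 10)⁻¹ / 8)) ^ n ≤ 1 :=
    pow_le_one₀ (by linarith) (by linarith [show 0 ≤ J * ((r ^ 10)⁻¹ / 8) by positivity])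
  calc (1 - 2 * (r ^ 2)⁻¹) / (4 * r ^ 3)
      = (r ^ 3)⁻¹ * (1 / 4) * (1 - 2 * (r ^ 2)⁻¹) := by field_simp
    _ ≤ (r ^ 3)⁻¹ * (1 / 4) * (1 - (1 - J * ((r ^ 10)⁻¹ / 8)) ^ n) := by gcongr
    _ ≤ (r ^ 3)⁻¹ * (1 - J / n) * (1 - (1 - J * ((r ^ 10)⁻¹ / 8)) ^ n) := by
        gcongr
        linarith

end Numerics

end GDLowerBound

open GDLowerBound

theorem statement9 :
    ∃ N : ℕ, ∀ n : ℕ, N ≤ n →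
      -- a finite instance space `Z` (encoded as `Fin p`), a distribution `D` on it
      -- (given by its probability mass function), a loss `f` and a gradient oracle `g`
      ∃ (p : ℕ) (D : Fin p → ℝ) (f : ℝ → Fin p → ℝ) (g : ℝ → Fin p → ℝ),
        (∀ z, 0 ≤ D z) ∧ (∑ z, D z) = 1 ∧
        -- (i) the population loss equals `n^{−3/8}·max{−w, −1}`; hence it is convex,
        -- 1-Lipschitz, and minimized exactly on `[1, ∞)` with minimum value `−n^{−3/8}`
        (∀ w : ℝ, (∑ z, D z * f w z) = (n : ℝ) ^ (-(3 : ℝ)/8) * max (-w) (-1)) ∧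
        ConvexOn ℝ Set.univ (fun w : ℝ => ∑ z, D z * f w z) ∧
        (∀ u v : ℝ, |(∑ z, D z * f u z) - (∑ z, D z * f v z)| ≤ |u - v|) ∧
        (∀ w : ℝ, (∑ z, D z * f w z) = -(n : ℝ) ^ (-(3 : ℝ)/8) ↔ 1 ≤ w) ∧
        (∀ w : ℝ, -(n : ℝ) ^ (-(3 : ℝ)/8) ≤ ∑ z, D z * f w z) ∧
        -- (ii) `E_z[g(w;z)]` is a subgradient of `F` at `w`, with variance at most 1
        (∀ w u : ℝ,
          (∑ z, D z * f w z) + (∑ z, D z * g w z) * (u - w) ≤ ∑ z, D z * f u z) ∧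
        (∀ w : ℝ, (∑ z, D z * |g w z - ∑ z', D z' * g w z'| ^ 2) ≤ 1) ∧
        -- (iii) lower bound for GD with any small step size `0 < η < 1/(64 n^{5/4})`
        (∀ (η : ℝ), 0 < η → η < 1 / (64 * (n : ℝ) ^ ((5 : ℝ)/4)) → ∀ T : ℕ, 1 ≤ T →
          (1 - 2 * (n : ℝ) ^ (-(1 : ℝ)/4)) / (4 * (n : ℝ) ^ ((3 : ℝ)/8)) ≤
            (∑ S : Fin n → Fin p, (∏ i, D (S i)) *
                (∑ z, D z * f ((T : ℝ)⁻¹ • ∑ t ∈ Finset.range T, gdIterate g η 0 S t) z))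
              - ⨅ w : ℝ, ∑ z, D z * f w z) := by
  refine ⟨64, fun n hn => ?_⟩
  have hn0 : (0 : ℝ) ≤ n := n.cast_nonneg
  rw [show -(3 : ℝ) / 8 = -((3 : ℕ) : ℝ) / 8 by norm_num,
    show -(1 : ℝ) / 4 = -((2 : ℕ) : ℝ) / 8 by norm_num,
    show (3 : ℝ) / 8 = ((3 : ℕ) : ℝ) / 8 by norm_num,
    show (5 : ℝ) / 4 = ((10 : ℕ) : ℝ) / 8 by norm_num,
    rpow_neg_div_eight hn0, rpow_neg_div_eight hn0, rpow_div_eight hn0, rpow_div_eight hn0]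
  set r := (n : ℝ) ^ ((1 : ℝ) / 8)
  have hrn : (n : ℝ) = r ^ 8 := by rw [← rpow_div_eight hn0]; norm_num
  obtain ⟨hr, hr4⟩ : 1 ≤ r ∧ 8 ≤ r ^ 4 := one_le_and_eight_le_pow_four (Real.rpow_nonneg hn0 _)
    (by rw [← hrn]; exact_mod_cast hn)
  set J := 3 * n / 4
  have hJ : (J : ℝ) ≤ r ^ 8 := by rw [← hrn]; exact_mod_cast (by omega : J ≤ n)
  have hJ2 : r ^ 8 / 2 ≤ J := by
    rw [← hrn, div_le_iff₀ two_pos]; exact_mod_cast (by omega : n ≤ J * 2)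
  have hc : 0 < (r ^ 3)⁻¹ := by positivity
  have hJq := mul_inv_pow_ten_le hr hJ
  have hb := bias_nonneg hr hJ
  have hF (w : ℝ) : ∑ z, mass J ((r ^ 10)⁻¹ / 8) z * clippedLoss (r ^ 3)⁻¹ w
      = clippedLoss (r ^ 3)⁻¹ w := by rw [← sum_mul, sum_mass, one_mul]
  refine ⟨J + 1, mass J ((r ^ 10)⁻¹ / 8), fun w _ => clippedLoss (r ^ 3)⁻¹ w,
    oracle n J (r ^ 3)⁻¹ ((r ^ 10)⁻¹ / 8) (2 * r ^ 5), ?_⟩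
  simp only [hF, iInf_clippedLoss hc.le]
  refine ⟨mass_nonneg (by positivity) (by linarith), sum_mass, fun w => rfl,
    convexOn_clippedLoss hc.le,
    abs_clippedLoss_sub_le hc.le (inv_le_one_of_one_le₀ (one_le_pow₀ hr)),
    clippedLoss_eq_neg_iff hc, neg_le_clippedLoss hc.le, fun w u => ?_,
    fun w => (sum_mass_mul_sq_oracle_sub_le (by positivity) (by linarith) w).trans
      (one_sub_mul_bias_sq_add_le_one hr hr4 hJ), fun η hη hη' T hT => ?_⟩
  · rw [sum_mass_mul_oracle (by linarith)]
    exact clippedLoss_add_subgrad_mul_le hc.le w u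
  · refine (div_le_mul_one_sub_div_mul_one_sub_pow hr hr4 hJ hrn hJ2 (by omega)).trans
      (le_expected_excess_clippedLoss (by omega) hc.le (by positivity) (by linarith) hb ?_ hη.le
        ?_ hT)
    · rw [hrn]; exact pow_eight_mul_add_bias_le hr hJ
    · rw [hrn]; exact mul_add_bias_le_one_div hr hJ hη'
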